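/- arXiv:2504.18293 — 3 statements merged into one kernel-verified Lean document; each statement's English description precedes it below -/
import Mathlib

section
/- Let k be a field of characteristic 0 with a fixed algebraic closure k̄, let K ⊆ k̄ be a finite Galois extension of k, let f ∈ k[x] be a monic irreducible polynomial, let a ∈ k̄ be a root of f, set L = k(a) and K' = K ∩ L. Then f(x), viewed as an element of the rational function field k(x), is a norm from K'(x): there exists h ∈ K'(x)× whose field norm N_{K'(x)/k(x)}(h) equals f(x). (Concretely, if f₁ ∈ K'[x] is the minimal polynomial of a over K', then N_{K'(x)/k(x)}(f₁) = f.) -/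
/-!
Let `F ⊆ L` be fields with `L = F(g)` finite over `F`. Over `F[x]`, the ring `L[x]` is the base
change of `L`, so in the induced basis multiplication by `x - g` has matrix `x - M`, where `M` is
the matrix of multiplication by `g`; hence `N_{L[x]/F[x]}(x - g)` is the characteristic polynomial
of `g`, i.e. its minimal polynomial. Since `L(x)` is the localization of `L[x]` at `F[x] \ {0}`,
the same holds for `N_{L(x)/F(x)}`. For `k ⊆ K' ⊆ L = k(a)` also `L = K'(a)`, and transitivity
of the norm gives `N_{K'(x)/k(x)}(minpoly_{K'} a) = N_{L(x)/k(x)}(x - a) = minpoly_k a = f`.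
-/

open Polynomial IntermediateField

/-- The natural algebra structure of the rational function field `E(x)` over the rational
function field `F(x)`, induced by a field extension `E/F`. -/
noncomputable instance ratFuncAlgebra (F E : Type*) [Field F] [Field E] [Algebra F E] :
    Algebra (RatFunc F) (RatFunc E) :=
  (RatFunc.mapRingHom (Polynomial.mapRingHom (algebraMap F E))
    (nonZeroDivisors_le_comap_nonZeroDivisors_of_injective _
      (Polynomial.map_injective _ (algebraMap F E).injective))).toAlgebra

open scoped nonZeroDivisors

namespace RatFunc

theorem algebraMap_ratFunc_div {F E : Type*} [Field F] [Field E] [Algebra F E] (p q : F[X]) :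
    algebraMap (RatFunc F) (RatFunc E) (algebraMap F[X] (RatFunc F) p / algebraMap _ _ q) =
      algebraMap E[X] (RatFunc E) (p.map (algebraMap F E)) /
        algebraMap E[X] (RatFunc E) (q.map (algebraMap F E)) :=
  map_apply_div _ (nonZeroDivisors_le_comap_nonZeroDivisors_of_injective _
    (Polynomial.map_injective _ (algebraMap F E).injective)) p q

instance isScalarTower_ratFunc (F E G : Type*) [Field F] [Field E] [Field G]
    [Algebra F E] [Algebra E G] [Algebra F G] [IsScalarTower F E G] :
    IsScalarTower (RatFunc F) (RatFunc E) (RatFunc G) := by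
  refine .of_algebraMap_eq fun x => ?_
  rw [← num_div_denom x, algebraMap_ratFunc_div, algebraMap_ratFunc_div, algebraMap_ratFunc_div,
    Polynomial.map_map, Polynomial.map_map, ← IsScalarTower.algebraMap_eq]

end RatFunc

-- Low priority, so that `Algebra F[X] F[X]` is still `Algebra.id`.
attribute [local instance 50] Polynomial.algebra

namespace Polynomial

variable {F E : Type*} [CommRing F] [CommRing E] [Algebra F E]

theorem isBaseChange_C : IsBaseChange F[X] (IsScalarTower.toAlgHom F E E[X]).toLinearMap :=
  Algebra.IsPushout.out

theorem moduleFree [Module.Free F E] : Module.Free F[X] E[X] :=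
  isBaseChange_C.free

theorem moduleFinite [Module.Free F E] [Module.Finite F E] : Module.Finite F[X] E[X] :=
  .of_basis (isBaseChange_C.basis (Module.Free.chooseBasis F E))

variable {ι : Type*} [Fintype ι] [DecidableEq ι] (b : Module.Basis ι F E)

theorem leftMulMatrix_basis_C (g : E) :
    Algebra.leftMulMatrix (isBaseChange_C.basis b) (C g) = (Algebra.leftMulMatrix b g).map C := by
  ext i j
  have hmul : C g * (IsScalarTower.toAlgHom F E E[X]).toLinearMap (b j) =
      (IsScalarTower.toAlgHom F E E[X]).toLinearMap (g * b j) := by simp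
  rw [Algebra.leftMulMatrix_eq_repr_mul, IsBaseChange.basis_apply, hmul,
    IsBaseChange.basis_repr_comp_apply, Matrix.map_apply, Algebra.leftMulMatrix_eq_repr_mul]
  rfl

theorem norm_X_sub_C_eq_charpoly (g : E) :
    Algebra.norm F[X] (X - C g : E[X]) = (Algebra.leftMulMatrix b g).charpoly := by
  have hX : (X : E[X]) = algebraMap F[X] E[X] X := by simp
  rw [Algebra.norm_eq_matrix_det (isBaseChange_C.basis b), map_sub, leftMulMatrix_basis_C, hX,
    AlgHom.commutes, Matrix.charpoly, Matrix.charmatrix, Matrix.algebraMap_eq_diagonal]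
  rfl

theorem norm_X_sub_C_gen (pb : PowerBasis F E) :
    Algebra.norm F[X] (X - C pb.gen : E[X]) = minpoly F pb.gen := by
  rw [norm_X_sub_C_eq_charpoly pb.basis, charpoly_leftMulMatrix]

end Polynomial

namespace RatFunc

variable {F E : Type*} [Field F] [Field E] [Algebra F E]

-- `RatFunc` has its own `SMul` instances, not reducibly equal to those of the algebra structures,
-- which are the ones `Algebra.norm_localization` needs.
instance isScalarTower_polynomial :
    @IsScalarTower F[X] (RatFunc F) (RatFunc E) Algebra.toSMul Algebra.toSMul Algebra.toSMul :=
  IsScalarTower.of_algebraMap_eq fun p => by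
    rw [← div_one (algebraMap F[X] (RatFunc F) p), ← map_one (algebraMap F[X] (RatFunc F)),
      algebraMap_ratFunc_div, Polynomial.map_one, map_one, div_one,
      IsScalarTower.algebraMap_apply F[X] E[X] (RatFunc E)]
    rfl

variable [FiniteDimensional F E]

attribute [local instance] Polynomial.moduleFree Polynomial.moduleFinite

theorem isLocalization_polynomial :
    IsLocalization (Algebra.algebraMapSubmonoid E[X] F[X]⁰) (RatFunc E) := by
  have : Algebra.IsAlgebraic (RatFunc F) (RatFunc E) :=
    isAlgebraic_of_isFractionRing F[X] E[X] (RatFunc F) (RatFunc E)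
  exact IsIntegralClosure.isLocalization F[X] (RatFunc F) (RatFunc E) E[X]

theorem norm_X_sub_C {g : E} (hg : F⟮g⟯ = ⊤) :
    Algebra.norm (RatFunc F) (algebraMap E[X] (RatFunc E) (Polynomial.X - Polynomial.C g)) =
      algebraMap F[X] (RatFunc F) (minpoly F g) := by
  have := isLocalization_polynomial (F := F) (E := E)
  let pb : PowerBasis F E := (adjoin.powerBasis (Algebra.IsIntegral.isIntegral g)).map
    ((equivOfEq hg).trans topEquiv)
  rw [Algebra.norm_localization F[X] (nonZeroDivisors F[X]), show g = pb.gen from rfl,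
    norm_X_sub_C_gen]

theorem norm_minpoly_of_adjoin_eq_top (K : Type*) [Field K] [Algebra F K] [Algebra K E]
    [IsScalarTower F K E] {g : E} (hg : F⟮g⟯ = ⊤) :
    Algebra.norm (RatFunc F) (algebraMap K[X] (RatFunc K) (minpoly K g)) =
      algebraMap F[X] (RatFunc F) (minpoly F g) := by
  have : FiniteDimensional K E := .right F K E
  rw [← norm_X_sub_C (adjoin_eq_top_of_adjoin_eq_top F hg), Algebra.norm_norm, norm_X_sub_C hg]

end RatFunc

theorem RatFunc.norm_minpoly_of_le_adjoin {F Ω : Type*} [Field F] [Field Ω] [Algebra F Ω]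
    {a : Ω} (ha : IsIntegral F a) {K : IntermediateField F Ω} (hK : K ≤ F⟮a⟯) :
    Algebra.norm (RatFunc F) (algebraMap K[X] (RatFunc K) (minpoly K a)) =
      algebraMap F[X] (RatFunc F) (minpoly F a) := by
  let : Algebra K F⟮a⟯ := (inclusion hK).toAlgebra
  have : IsScalarTower F K F⟮a⟯ := .of_algebraMap_eq fun _ => rfl
  have : IsScalarTower K F⟮a⟯ Ω := .of_algebraMap_eq fun _ => rfl
  have : FiniteDimensional F F⟮a⟯ := adjoin.finiteDimensional ha
  have hgen : F⟮AdjoinSimple.gen F a⟯ = ⊤ :=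
    adjoin_eq_top_of_algebra F _ (adjoin.powerBasis ha).adjoin_gen_eq_top
  have hmin : minpoly K (AdjoinSimple.gen F a) = minpoly K a := by
    rw [← minpoly.algebraMap_eq (algebraMap F⟮a⟯ Ω).injective, AdjoinSimple.algebraMap_gen]
  rw [← hmin, norm_minpoly_of_adjoin_eq_top K hgen, minpoly_gen]

theorem stmt0_general (k : Type*) [Field k]
    (K : IntermediateField k (AlgebraicClosure k))
    (f : Polynomial k) (hmonic : f.Monic) (hirr : Irreducible f)
    (a : AlgebraicClosure k) (ha : Polynomial.aeval a f = 0)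
    (L K' : IntermediateField k (AlgebraicClosure k))
    (hL : L = IntermediateField.adjoin k {a}) (hK' : K' = K ⊓ L) :
    (∃ h : RatFunc K', h ≠ 0 ∧
        Algebra.norm (RatFunc k) h = algebraMap (Polynomial k) (RatFunc k) f) ∧
      Algebra.norm (RatFunc k)
          (algebraMap (Polynomial K') (RatFunc K') (minpoly K' a)) =
        algebraMap (Polynomial k) (RatFunc k) f := by
  subst hL hK'
  have hint : IsIntegral k a := ⟨f, hmonic, by rwa [← aeval_def]⟩
  have hnorm := RatFunc.norm_minpoly_of_le_adjoin hint (inf_le_right : K ⊓ k⟮a⟯ ≤ k⟮a⟯)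
  rw [← minpoly.eq_of_irreducible_of_monic hirr ha hmonic] at hnorm
  exact ⟨⟨_, RatFunc.algebraMap_ne_zero (minpoly.ne_zero hint.tower_top), hnorm⟩, hnorm⟩

/-- Let `k` be a field of characteristic `0` with a fixed algebraic closure
`k̄`, let `K ⊆ k̄` be a finite Galois extension of `k`, let `f ∈ k[x]` be a monic irreducible
polynomial, let `a ∈ k̄` be a root of `f`, and set `L = k(a)`, `K' = K ∩ L`. Then `f(x)`,
viewed in the rational function field `k(x)`, is a norm from `K'(x)`: there is
`h ∈ K'(x)ˣ` with `N_{K'(x)/k(x)}(h) = f(x)`.  (Concretely, if `f₁` is the minimal polynomial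
of `a` over `K'`, then `N_{K'(x)/k(x)}(f₁) = f`.) -/
theorem stmt0 (k : Type*) [Field k] [CharZero k]
    (K : IntermediateField k (AlgebraicClosure k))
    [FiniteDimensional k K] [IsGalois k K]
    (f : Polynomial k) (hmonic : f.Monic) (hirr : Irreducible f)
    (a : AlgebraicClosure k) (ha : Polynomial.aeval a f = 0)
    (L K' : IntermediateField k (AlgebraicClosure k))
    (hL : L = IntermediateField.adjoin k {a}) (hK' : K' = K ⊓ L) :
    (∃ h : RatFunc K', h ≠ 0 ∧
        Algebra.norm (RatFunc k) h = algebraMap (Polynomial k) (RatFunc k) f) ∧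
      Algebra.norm (RatFunc k)
          (algebraMap (Polynomial K') (RatFunc K') (minpoly K' a)) =
        algebraMap (Polynomial k) (RatFunc k) f :=
  stmt0_general k K f hmonic hirr a ha L K' hL hK'
end

section
/- Let k be a field of characteristic 0 with a fixed algebraic closure k̄, let K ⊆ k̄ be a finite Galois extension of k, let f ∈ k[x] be a monic irreducible polynomial, let a ∈ k̄ be a root of f, and set L = k(a). Then the number of monic irreducible factors of f in K[x] equals [K : k] / [LK : L], where LK is the compositum of L and K inside k̄. -/
open Polynomial IntermediateField

set_option maxHeartbeats 1000000 in
/-- Let `k` be a field of characteristic `0` with a fixed algebraic closure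
`k̄`, let `K ⊆ k̄` be a finite Galois extension of `k`, let `f ∈ k[x]` be a monic irreducible
polynomial, let `a ∈ k̄` be a root of `f`, and set `L = k(a)`. Then the number of monic
irreducible factors of `f` in `K[x]` equals `[K : k] / [LK : L]`, where `LK` is the compositum
of `L` and `K` inside `k̄`. -/
theorem stmt3 (k : Type*) [Field k] [CharZero k]
    (K : IntermediateField k (AlgebraicClosure k))
    [FiniteDimensional k K] [IsGalois k K]
    (f : Polynomial k) (hmonic : f.Monic) (hirr : Irreducible f)
    (a : AlgebraicClosure k) (ha : Polynomial.aeval a f = 0)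
    (L : IntermediateField k (AlgebraicClosure k))
    (hL : L = IntermediateField.adjoin k {a}) :
    {g : Polynomial K | g.Monic ∧ Irreducible g ∧ g ∣ f.map (algebraMap k K)}.ncard =
      Module.finrank k K /
        Module.finrank L (IntermediateField.adjoin L (K : Set (AlgebraicClosure k))) := by
  classical
  have hfa : minpoly k a = f := (minpoly.eq_of_irreducible_of_monic hirr ha hmonic).symm
  
  set F : Polynomial K := f.map (algebraMap k K) with hFdef
  have hFmonic : F.Monic := hmonic.map _
  have hF0 : F ≠ 0 := hFmonic.ne_zero
  have hsep : f.Separable := hirr.separable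
  have hFsep : F.Separable := hsep.map
  have hsq : Squarefree F := hFsep.squarefree
  set e := Module.finrank L (IntermediateField.adjoin L (K : Set (AlgebraicClosure k))) with he
  set m := Module.finrank k K with hm
  set l := f.natDegree with hl
  -- the set of monic irreducible factors is the set of normalized factors
  have hS : {g : Polynomial K | g.Monic ∧ Irreducible g ∧ g ∣ F}
      = ↑(UniqueFactorizationMonoid.normalizedFactors F).toFinset := by
    ext g
    simp only [Set.mem_setOf_eq, Finset.coe_sort_coe, Finset.mem_coe, Multiset.mem_toFinset]
    constructor
    · rintro ⟨hmg, hi, hd⟩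
      obtain ⟨p, hp, hassoc⟩ :=
        UniqueFactorizationMonoid.exists_mem_normalizedFactors_of_dvd hF0 hi hd
      have hp0 : p ≠ 0 :=
        (UniqueFactorizationMonoid.irreducible_of_normalized_factor p hp).ne_zero
      have hpm : p.Monic := by
        have h1 := UniqueFactorizationMonoid.normalize_normalized_factor p hp
        have h2 := Polynomial.monic_normalize (p := p) hp0
        rwa [h1] at h2
      rwa [Polynomial.eq_of_monic_of_associated hmg hpm hassoc]
    · intro hg
      have hi := UniqueFactorizationMonoid.irreducible_of_normalized_factor g hg
      have hgm : g.Monic := by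
        have h1 := UniqueFactorizationMonoid.normalize_normalized_factor g hg
        have h2 := Polynomial.monic_normalize (p := g) hi.ne_zero
        rwa [h1] at h2
      exact ⟨hgm, hi, UniqueFactorizationMonoid.dvd_of_mem_normalizedFactors hg⟩
  have hnodup : (UniqueFactorizationMonoid.normalizedFactors F).Nodup :=
    (UniqueFactorizationMonoid.squarefree_iff_nodup_normalizedFactors hF0).mp hsq
  -- the compositum over `k`
  have hLK : restrictScalars k (IntermediateField.adjoin L (K : Set (AlgebraicClosure k))) = K ⊔ L := by
    rw [restrictScalars_adjoin_eq_sup, adjoin_self, sup_comm]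
  have haint : IsIntegral k a := ⟨f, hmonic, ha⟩
  have hfinL : Module.finrank k L = l := by
    rw [hL]
    rw [IntermediateField.adjoin.finrank haint, hfa]
  -- key degree computation: every root of `f` gives the same compositum degree
  have key : ∀ b : (AlgebraicClosure k), Polynomial.aeval b f = 0 → m * (minpoly K b).natDegree = l * e := by
    intro b hb
    have hba : IsAlgebraic k a := ⟨f, hmonic.ne_zero, ha⟩
    obtain ⟨σ, hσ⟩ := minpoly.exists_algEquiv_of_root (K := k) (L := (AlgebraicClosure k)) hba
      (by rw [hfa]; exact hb)
    have hKset : ⇑σ.toAlgHom '' (K : Set (AlgebraicClosure k))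
        = (K : Set (AlgebraicClosure k)) := by
      have h1 : (σ.toAlgHom.comp K.val).fieldRange = K := AlgHom.fieldRange_of_normal _
      have h2 := congrArg (fun E : IntermediateField k (AlgebraicClosure k) =>
        (E : Set (AlgebraicClosure k))) h1
      simpa [AlgHom.coe_fieldRange, AlgHom.coe_comp, Set.range_comp] using h2
    have hKmap : K.map σ.toAlgHom = K := by
      apply SetLike.coe_injective
      have : (K.map σ.toAlgHom : Set (AlgebraicClosure k))
          = ⇑σ.toAlgHom '' (K : Set (AlgebraicClosure k)) := rfl
      rw [this, hKset]
    have hEb : (restrictScalars k (IntermediateField.adjoin K {b})).map σ.toAlgHom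
        = restrictScalars k (IntermediateField.adjoin K {a}) := by
      rw [restrictScalars_adjoin, restrictScalars_adjoin, adjoin_map]
      congr 1
      have hσ' : (σ.toAlgHom : AlgebraicClosure k → AlgebraicClosure k) b = a := hσ
      rw [Set.image_union, Set.image_singleton, hσ', hKset]
    have hrank : Module.finrank k (restrictScalars k (IntermediateField.adjoin K {b}))
        = Module.finrank k (restrictScalars k (IntermediateField.adjoin K {a})) := by
      rw [← hEb]
      exact (IntermediateField.equivMap (restrictScalars k (IntermediateField.adjoin K {b}))
        σ.toAlgHom).toLinearEquiv.finrank_eq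
    have hbint : IsIntegral K b := (IsIntegral.tower_top (A := K) ⟨f, hmonic, hb⟩)
    have htb : m * (minpoly K b).natDegree
        = Module.finrank k (restrictScalars k (IntermediateField.adjoin K {b})) := by
      rw [← IntermediateField.adjoin.finrank hbint]
      exact Module.finrank_mul_finrank k K (IntermediateField.adjoin K {b})
    have hKa : restrictScalars k (IntermediateField.adjoin K {a}) = K ⊔ L := by
      rw [restrictScalars_adjoin_eq_sup, hL]
    have hta : Module.finrank k (restrictScalars k (IntermediateField.adjoin K {a}))
        = l * e := by
      rw [hKa, ← hLK, ← hfinL]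
      exact (Module.finrank_mul_finrank k L (IntermediateField.adjoin L (K : Set (AlgebraicClosure k)))).symm
    rw [htb, hrank, hta]
  -- every normalized factor has the same weighted degree
  have hdeg : ∀ g ∈ UniqueFactorizationMonoid.normalizedFactors F,
      m * g.natDegree = l * e := by
    intro g hg
    have hi := UniqueFactorizationMonoid.irreducible_of_normalized_factor g hg
    have hgm : g.Monic := by
      have h1 := UniqueFactorizationMonoid.normalize_normalized_factor g hg
      have h2 := Polynomial.monic_normalize (p := g) hi.ne_zero
      rwa [h1] at h2
    have hd := UniqueFactorizationMonoid.dvd_of_mem_normalizedFactors hg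
    have hdeg0 : g.degree ≠ 0 := by
      have := hi.natDegree_pos
      intro hcon
      rw [Polynomial.degree_eq_natDegree hi.ne_zero] at hcon
      exact_mod_cast this.ne' (by exact_mod_cast hcon)
    obtain ⟨b, hbg⟩ := IsAlgClosed.exists_aeval_eq_zero (AlgebraicClosure k) g hdeg0
    have hgb : minpoly K b = g := (minpoly.eq_of_irreducible_of_monic hi hbg hgm).symm
    have hbf : Polynomial.aeval b f = 0 := by
      obtain ⟨q, hq⟩ := hd
      have : Polynomial.aeval b F = 0 := by
        rw [hq, map_mul, hbg, zero_mul]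
      rwa [hFdef, Polynomial.aeval_map_algebraMap] at this
    rw [← hgb]
    exact key b hbf
  -- sum of degrees
  have hFdeg : F.natDegree = l := hmonic.natDegree_map _
  have hprod : ((UniqueFactorizationMonoid.normalizedFactors F).prod) = F := by
    have hassoc := UniqueFactorizationMonoid.prod_normalizedFactors hF0
    have hmp : ((UniqueFactorizationMonoid.normalizedFactors F).prod).Monic := by
      rw [show (UniqueFactorizationMonoid.normalizedFactors F)
        = (UniqueFactorizationMonoid.normalizedFactors F).map id by simp]
      exact Polynomial.monic_multiset_prod_of_monic _ id (fun g hg => by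
        have hi := UniqueFactorizationMonoid.irreducible_of_normalized_factor g hg
        have h1 := UniqueFactorizationMonoid.normalize_normalized_factor g hg
        have h2 := Polynomial.monic_normalize (p := g) hi.ne_zero
        rwa [h1] at h2)
    exact Polynomial.eq_of_monic_of_associated hmp hFmonic hassoc
  set n := Multiset.card (UniqueFactorizationMonoid.normalizedFactors F) with hn
  have hsum : l = ((UniqueFactorizationMonoid.normalizedFactors F).map
      Polynomial.natDegree).sum := by
    have h := Polynomial.natDegree_multiset_prod_of_monic
      (UniqueFactorizationMonoid.normalizedFactors F) (fun g hg => by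
        have hi := UniqueFactorizationMonoid.irreducible_of_normalized_factor g hg
        have h1 := UniqueFactorizationMonoid.normalize_normalized_factor g hg
        have h2 := Polynomial.monic_normalize (p := g) hi.ne_zero
        rwa [h1] at h2)
    rw [hprod, hFdeg] at h
    exact h
  have hml : m * ((UniqueFactorizationMonoid.normalizedFactors F).map
      Polynomial.natDegree).sum = n * (l * e) := by
    rw [← Multiset.sum_map_mul_left]
    have : ((UniqueFactorizationMonoid.normalizedFactors F).map
        (fun g => m * g.natDegree)) = (UniqueFactorizationMonoid.normalizedFactors F).map
        (fun _ => l * e) := Multiset.map_congr rfl hdeg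
    rw [this, Multiset.map_const', Multiset.sum_replicate, smul_eq_mul, ← hn]
  have hl0 : l ≠ 0 := hirr.natDegree_pos.ne'
  have hme : m = n * e := by
    have : l * m = l * (n * e) := by
      rw [mul_comm l m, hsum, hml, ← hsum]; ring
    exact Nat.eq_of_mul_eq_mul_left (Nat.pos_of_ne_zero hl0) this
  have hm0 : m ≠ 0 := Module.finrank_pos.ne'
  have he0 : 0 < e := by
    rcases Nat.eq_zero_or_pos e with h | h
    · exfalso; exact hm0 (by rw [hme, h, mul_zero])
    · exact h
  rw [hS, Set.ncard_coe_finset, Multiset.toFinset_card_of_nodup hnodup, hme,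
    Nat.mul_div_cancel _ he0]
end

section
/- Let k be a field, let h ∈ k[x] be an irreducible polynomial, and let L/k be a field extension such that h has a root θ ∈ L. If g ∈ k[x] is a polynomial such that g − θ (the image of g in L[x] with the constant θ subtracted) is irreducible over L, then the composite polynomial h ∘ g (that is, h(g(x))) is irreducible over k. -/
/-!
If `α` is a root of `h ∘ g`, then `β = g(α)` is a root of `h`, so `[k(β) : k] = deg h`. Since
`β` and `θ` are conjugate, `k(β) ≅ k(θ)` carries `g - β` to `g - θ`, which is irreducible over
`k(θ) ⊆ L`; hence `[k(α) : k(β)] = deg g` and `[k(α) : k] = deg (h ∘ g)`. This degree count is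
Mathlib's `Polynomial.irreducible_comp` for monic `h` and `g`. A general `g` with leading
coefficient `c` is made monic by passing to `g / c`, `h(c X)` and `θ / c`.
-/

open Polynomial IntermediateField

namespace Polynomial

variable {k : Type*} [Field k]

theorem irreducible_of_irreducible_map {K : Type*} [Field K] (φ : k →+* K) {p : k[X]}
    (hp : Irreducible (p.map φ)) : Irreducible p :=
  ((isPrimitive_iff_ne_zero p).mpr (by rintro rfl; simp at hp))
    |>.irreducible_of_irreducible_map_of_injective φ.injective hp

theorem Irreducible.comp_C_mul_X {p : k[X]} (hp : Irreducible p) {c : k} (hc : c ≠ 0) :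
    Irreducible (p.comp (C c * X)) := by
  have : Invertible c := invertibleOfNonzero hc
  simpa [← comp_eq_aeval] using (MulEquiv.irreducible_iff (algEquivCMulXAddC c 0)).mpr hp

theorem irreducible_map_sub_C_gen_of_minpoly_eq {E L : Type*} [Field E] [Algebra k E] [Field L]
    [Algebra k L] {x : E} {y : L} (hx : IsIntegral k x) (hxy : minpoly k x = minpoly k y) {g : k[X]}
    (hg : Irreducible (g.map (algebraMap k L) - C y)) :
    Irreducible (g.map (algebraMap k k⟮x⟯) - C (AdjoinSimple.gen k x)) := by
  have hy : IsIntegral k y := minpoly.ne_zero_iff.mp (hxy ▸ minpoly.ne_zero hx)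
  let e : k⟮x⟯ ≃ₐ[k] k⟮y⟯ := ((adjoinRootEquivAdjoin k hx).symm.trans
    (AdjoinRoot.algEquivOfEq k _ _ hxy)).trans (adjoinRootEquivAdjoin k hy)
  have he : e (AdjoinSimple.gen k x) = AdjoinSimple.gen k y := by
    simp [e, adjoinRootEquivAdjoin_symm_apply_gen, AdjoinRoot.algEquivOfEq_root,
      adjoinRootEquivAdjoin_apply_root]
  have hmap : (g.map (algebraMap k k⟮x⟯) - C (AdjoinSimple.gen k x)).map
      (e.toRingEquiv : k⟮x⟯ →+* k⟮y⟯) =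
      g.map (algebraMap k k⟮y⟯) - C (AdjoinSimple.gen k y) := by
    rw [Polynomial.map_sub, map_C, Polynomial.map_map]
    congr 1
    · exact congrArg (Polynomial.map · g) e.toAlgHom.comp_algebraMap
    · exact congrArg C he
  rw [← MulEquiv.irreducible_iff (mapEquiv e.toRingEquiv)]
  change Irreducible (Polynomial.map _ _)
  rw [hmap]
  refine irreducible_of_irreducible_map (algebraMap k⟮y⟯ L) ?_
  rwa [Polynomial.map_sub, map_C, Polynomial.map_map, AdjoinSimple.algebraMap_gen,
    ← IsScalarTower.algebraMap_eq]

theorem irreducible_comp_of_irreducible_map_sub_C {L : Type*} [Field L] [Algebra k L]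
    {f g : k[X]} (hf : Irreducible f) (hg : g.Monic) {θ : L} (hθ : aeval θ f = 0)
    (hgθ : Irreducible (g.map (algebraMap k L) - C θ)) : Irreducible (f.comp g) := by
  have hu : IsUnit (C f.leadingCoeff⁻¹) :=
    isUnit_C.mpr (inv_ne_zero (leadingCoeff_ne_zero.mpr hf.ne_zero)).isUnit
  set f₀ := f * C f.leadingCoeff⁻¹
  have hf₀m : f₀.Monic := monic_mul_leadingCoeff_inv hf.ne_zero
  have hf₀ : Irreducible f₀ := (irreducible_mul_isUnit hu).mpr hf
  have hθf₀ : minpoly k θ = f₀ :=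
    (minpoly.eq_of_irreducible_of_monic hf₀ (by simp [f₀, hθ]) hf₀m).symm
  have : Irreducible (f₀.comp g) := irreducible_comp hf₀m hg hf₀ fun _ _ _ x hx =>
    irreducible_map_sub_C_gen_of_minpoly_eq (minpoly.ne_zero_iff.mp (hx ▸ hf₀m.ne_zero))
      (hx.trans hθf₀.symm) hgθ
  rwa [mul_comp, C_comp, irreducible_mul_isUnit hu] at this

end Polynomial

/-- Let `k` be a field, `h ∈ k[x]` an irreducible polynomial, and `L/k` a
field extension such that `h` has a root `θ ∈ L`. If `g ∈ k[x]` is such that `g − θ` is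
irreducible over `L`, then `h ∘ g` is irreducible over `k`. -/
theorem stmt12 (k L : Type*) [Field k] [Field L] [Algebra k L]
    (h : Polynomial k) (hh : Irreducible h) (θ : L) (hθ : Polynomial.aeval θ h = 0)
    (g : Polynomial k) (hg : Irreducible (g.map (algebraMap k L) - Polynomial.C θ)) :
    Irreducible (h.comp g) := by
  have hg₀ : g ≠ 0 := by
    rintro rfl
    exact not_irreducible_C (-θ) (by simpa using hg)
  set c := g.leadingCoeff
  have hc : c ≠ 0 := leadingCoeff_ne_zero.mpr hg₀
  have hcL : algebraMap k L c ≠ 0 := (_root_.map_ne_zero _).mpr hc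
  have hcomp : h.comp g = (h.comp (C c * X)).comp (g * C c⁻¹) := by
    rw [comp_assoc, mul_comp, C_comp, X_comp, mul_left_comm, ← C_mul, mul_inv_cancel₀ hc, C_1,
      mul_one]
  have hroot : aeval ((algebraMap k L c)⁻¹ * θ) (h.comp (C c * X)) = 0 := by
    simp [aeval_comp, mul_inv_cancel_left₀ hcL, hθ]
  have hscale : (g * C c⁻¹).map (algebraMap k L) - C ((algebraMap k L c)⁻¹ * θ) =
      C (algebraMap k L c)⁻¹ * (g.map (algebraMap k L) - C θ) := by
    simp only [Polynomial.map_mul, map_C, map_inv₀, C_mul]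
    ring
  rw [hcomp]
  refine irreducible_comp_of_irreducible_map_sub_C (hh.comp_C_mul_X hc)
    (monic_mul_leadingCoeff_inv hg₀) hroot ?_
  rw [hscale]
  exact (irreducible_isUnit_mul (isUnit_C.mpr (inv_ne_zero hcL).isUnit)).mpr hg
end
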